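/- (Rudnick–Sarnak identity) For real numbers x_1,…,x_n with x_1 + ⋯ + x_n = 0, ∑_{σ ∈ S_n} M(x_{σ(1)},…,x_{σ(n)}) = (n/4) ∑_{F ⊆ {1,…,n}} (|F|−1)!·(n−|F|−1)!·|∑_{k∈F} x_k|, where the sum is over all subsets F of {1,…,n}, with the convention (−1)! = 0 (so the terms F = ∅ and F = {1,…,n} vanish). -/

import Mathlib

/-!
Write `M(y)` for the largest partial sum of `y`, the empty one included. Appending a last entry
to `y` gives `M(y, t) = M(y) + (S - M(y))⁺`, with `S` the total. Spitzer's cycle lemma: along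
the `n + 1` rotations of a cyclic sequence with sum `S`, the quantities `(S - M(first n entries))⁺`
telescope to `S⁺`. Summed over permutations, the correction term is therefore `n! S⁺`, and
induction on `n` gives the subset form of the Dyson–Hunt–Kac formula,
`∑_σ M(x_σ) = ∑_F (|F| - 1)! (n - |F|)! (x_F)⁺`.

When `∑ x = 0`, write `(x_F)⁺ = (|x_F| + x_F) / 2`: the linear part vanishes because every index
lies in equally many subsets of each size, and pairing `F` with its complement (`x_Fᶜ = -x_F`)
merges the weights into `(|F| - 1)! (n - |F|)! + (n - |F| - 1)! |F|! = n (|F| - 1)! (n - |F| - 1)!`.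
-/

open Finset Nat

noncomputable def windowMax (f : ℕ → ℝ) (n a : ℕ) : ℝ :=
  (range (n + 1)).sup' nonempty_range_add_one fun j => f (a + j)

section CycleLemma

variable {f : ℕ → ℝ} {n : ℕ} {T : ℝ}

theorem windowMax_add_one {a : ℕ} (h : f a ≤ f (a + (n + 1))) :
    windowMax f n (a + 1) = max (windowMax f n a) (f (a + (n + 1))) := by
  have hlast : (range (n + 2)).sup' nonempty_range_add_one (fun j => f (a + j)) =
      max (windowMax f n a) (f (a + (n + 1))) := by
    rw [windowMax, sup_comm]
    simp_rw [range_add_one (n := n + 1), sup'_insert nonempty_range_add_one]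
  have hfirst : (range (n + 2)).sup' nonempty_range_add_one (fun j => f (a + j)) =
      max (f a) (windowMax f n (a + 1)) := by
    have hr : range (n + 2) = insert 0 ((range (n + 1)).map (addRightEmbedding 1)) := by
      ext j
      cases j <;> simp
    simp_rw [hr]
    rw [sup'_insert (by simp), sup'_map]
    simp [windowMax, add_assoc, add_comm 1]
  have : f a ≤ windowMax f n (a + 1) :=
    h.trans (le_sup'_of_le _ (mem_range.2 n.lt_add_one) (by rw [add_assoc, add_comm 1]))
  rw [← hlast, hfirst, max_eq_right this]

theorem windowMax_add_period (hf : ∀ a, f (a + (n + 1)) = f a + T) (a : ℕ) :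
    windowMax f n (a + (n + 1)) = windowMax f n a + T := by
  simp only [windowMax, sup'_add]
  exact sup'_congr _ rfl fun j _ => by rw [add_right_comm, hf]

theorem sum_posPart_sub_windowMax (hf : ∀ a, f (a + (n + 1)) = f a + T) :
    ∑ a ∈ range (n + 1), (f (a + (n + 1)) - windowMax f n a)⁺ = T⁺ := by
  have self_le (a : ℕ) : f a ≤ windowMax f n a :=
    le_sup'_of_le _ (mem_range.2 n.succ_pos) (by rw [add_zero])
  rcases le_total T 0 with hT | hT
  · have (a : ℕ) : (f (a + (n + 1)) - windowMax f n a)⁺ = 0 :=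
      posPart_eq_zero.2 (by linarith [hf a, self_le a])
    simp [this, posPart_eq_zero.2 hT]
  · have step (a : ℕ) : (f (a + (n + 1)) - windowMax f n a)⁺ =
        windowMax f n (a + 1) - windowMax f n a := by
      rw [windowMax_add_one (by linarith [hf a]), max_comm, sup_eq_add_posPart_sub]
      ring
    have hperiod := windowMax_add_period hf 0
    rw [zero_add] at hperiod
    simp only [step, sum_range_sub, posPart_of_nonneg hT, hperiod]
    ring

end CycleLemma

noncomputable def prefixSum {n : ℕ} (y : Fin n → ℝ) (j : ℕ) : ℝ :=
  ∑ i ∈ univ.filter (fun i : Fin n => (i : ℕ) < j), y i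

-- The paper's `M(0, y₁, …, yₙ)`.
noncomputable def maxPrefixSum {n : ℕ} (y : Fin n → ℝ) : ℝ :=
  (range (n + 1)).sup' nonempty_range_add_one (prefixSum y)

section PrefixSums

variable {n : ℕ}

@[simp]
theorem prefixSum_zero (y : Fin n → ℝ) : prefixSum y 0 = 0 := by
  simp [prefixSum]

theorem prefixSum_of_le (y : Fin n → ℝ) {j : ℕ} (hj : n ≤ j) : prefixSum y j = ∑ i, y i := by
  rw [prefixSum, filter_true_of_mem fun i _ => i.2.trans_le hj]

theorem prefixSum_castSucc (y : Fin (n + 1) → ℝ) {j : ℕ} (hj : j ≤ n) :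
    prefixSum (y ∘ Fin.castSucc) j = prefixSum y j := by
  simp only [prefixSum, sum_filter, Fin.sum_univ_castSucc, Function.comp_apply,
    Fin.val_castSucc, Fin.val_last, not_lt.2 hj, if_false, add_zero]

theorem prefixSum_natCast (g : ℕ → ℝ) {j : ℕ} (hj : j ≤ n) :
    prefixSum (fun i : Fin n => g i) j = ∑ t ∈ range j, g t := by
  rw [prefixSum, sum_filter, Fin.sum_univ_eq_sum_range (fun t => if t < j then g t else 0),
    ← sum_filter]
  congr 1
  ext t
  simp only [mem_filter, mem_range]
  omega

theorem maxPrefixSum_fin_zero (y : Fin 0 → ℝ) : maxPrefixSum y = 0 := by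
  simp [maxPrefixSum]

theorem maxPrefixSum_succ (y : Fin (n + 1) → ℝ) :
    maxPrefixSum y = max (maxPrefixSum (y ∘ Fin.castSucc)) (∑ i, y i) := by
  rw [maxPrefixSum, maxPrefixSum, sup_comm]
  simp_rw [range_add_one (n := n + 1)]
  rw [sup'_insert nonempty_range_add_one, prefixSum_of_le y le_rfl]
  congr 1
  exact sup'_congr _ rfl fun j hj => (prefixSum_castSucc y (mem_range_succ_iff.1 hj)).symm

theorem sup'_Icc_prefixSum_eq_maxPrefixSum (hn : 1 ≤ n) {y : Fin n → ℝ} (hy : ∑ i, y i = 0) :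
    (Icc 1 n).sup' (nonempty_Icc.mpr hn) (prefixSum y) = maxPrefixSum y := by
  have hr : range (n + 1) = insert 0 (Icc 1 n) := by
    ext j
    simp only [mem_range, mem_insert, mem_Icc]
    omega
  rw [maxPrefixSum]
  simp_rw [hr]
  rw [sup'_insert (nonempty_Icc.mpr hn), prefixSum_zero, eq_comm, sup_eq_right]
  calc (0 : ℝ) = prefixSum y n := ((prefixSum_of_le y le_rfl).trans hy).symm
    _ ≤ _ := le_sup' _ (mem_Icc.2 ⟨hn, le_rfl⟩)

end PrefixSums

section Rotation

open Fin.NatCast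

variable {n : ℕ}

theorem sum_range_natCast_add (w : Fin (n + 1) → ℝ) (a : ℕ) :
    ∑ t ∈ range (n + 1), w ((a + t : ℕ) : Fin (n + 1)) = ∑ i, w i := by
  rw [← Fin.sum_univ_eq_sum_range (fun t => w ((a + t : ℕ) : Fin (n + 1)))]
  simp only [Nat.cast_add, Fin.cast_val_eq_self]
  exact Equiv.sum_comp (Equiv.addLeft (a : Fin (n + 1))) w

theorem sum_posPart_sum_sub_maxPrefixSum_rotate (w : Fin (n + 1) → ℝ) :
    ∑ a : Fin (n + 1), (∑ i, w i - maxPrefixSum fun i : Fin n => w (i.castSucc + a))⁺ =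
      (∑ i, w i)⁺ := by
  -- `w t` reads `t` modulo `n + 1`: `P` is the partial-sum sequence of the periodic extension.
  set P : ℕ → ℝ := fun k => ∑ t ∈ range k, w t
  have hP (a : ℕ) : P (a + (n + 1)) = P a + ∑ i, w i := by
    simp only [P, sum_range_add _ a, sum_range_natCast_add]
  have hrot (a : Fin (n + 1)) : ∑ i, w i - maxPrefixSum (fun i : Fin n => w (i.castSucc + a)) =
      P (a + (n + 1)) - windowMax P n a := by
    have hw : (fun i : Fin n => w (i.castSucc + a)) =
        fun i : Fin n => w ((a + i : ℕ) : Fin (n + 1)) := by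
      ext i
      simp [add_comm]
    have hpre : ∀ j ∈ range (n + 1),
        prefixSum (fun i : Fin n => w (i.castSucc + a)) j = P (a + j) + -P a := fun j hj => by
      rw [hw, prefixSum_natCast (fun t => w ((a + t : ℕ) : Fin (n + 1))) (mem_range_succ_iff.1 hj)]
      simp only [P, sum_range_add _ a]
      ring
    rw [maxPrefixSum, sup'_congr _ rfl hpre, ← sup'_add, hP, windowMax]
    ring
  simp_rw [hrot]
  rw [Fin.sum_univ_eq_sum_range (fun a => (P (a + (n + 1)) - windowMax P n a)⁺),
    sum_posPart_sub_windowMax hP]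

end Rotation

-- At `F = ∅` the weight is `(0 - 1)! = 0! = 1` in `ℕ`, harmless since it multiplies `0⁺`.
noncomputable def subsetPosPartSum {ι : Type*} [Fintype ι] (n : ℕ) (x : ι → ℝ) : ℝ :=
  ∑ F : Finset ι, (((#F - 1)! * (n - #F)! : ℕ) : ℝ) * (∑ i ∈ F, x i)⁺

theorem sub_mul_factorial_mul_factorial_add_ite {n k : ℕ} (hk : k ≤ n + 1) :
    (n + 1 - k) * ((k - 1)! * (n - k)!) + (if k = n + 1 then n ! else 0) =
      (k - 1)! * (n + 1 - k)! := by
  rcases hk.eq_or_lt with rfl | hk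
  · simp
  · rw [if_neg hk.ne, add_zero, Nat.sub_add_comm (Nat.lt_succ_iff.1 hk), Nat.factorial_succ]
    ring

section Permutations

variable {ι : Type*} [Fintype ι] [DecidableEq ι] {n : ℕ}

theorem sum_posPart_sum_sub_maxPrefixSum_castSucc (hι : Fintype.card ι = n + 1) (x : ι → ℝ) :
    ∑ σ : Fin (n + 1) ≃ ι, (∑ i, x i - maxPrefixSum (x ∘ σ ∘ Fin.castSucc))⁺ =
      n ! * (∑ i, x i)⁺ := by
  set H : (Fin (n + 1) ≃ ι) → ℝ := fun σ => (∑ i, x i - maxPrefixSum (x ∘ σ ∘ Fin.castSucc))⁺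
  have hcycle (σ : Fin (n + 1) ≃ ι) :
      ∑ a : Fin (n + 1), H ((Equiv.addRight a).trans σ) = (∑ i, x i)⁺ := by
    have := sum_posPart_sum_sub_maxPrefixSum_rotate (x ∘ σ)
    simp only [Function.comp_apply, Equiv.sum_comp σ x] at this
    exact this
  have hshift (a : Fin (n + 1)) : ∑ σ, H ((Equiv.addRight a).trans σ) = ∑ σ, H σ :=
    Equiv.sum_comp ((Equiv.addRight a).symm.equivCongr (Equiv.refl ι)) H
  have hcard : (Fintype.card (Fin (n + 1) ≃ ι) : ℝ) = (n + 1) * n ! := by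
    rw [Fintype.card_equiv (Fintype.equivFinOfCardEq hι).symm, Fintype.card_fin,
      Nat.factorial_succ]
    push_cast
    ring
  refine mul_left_cancel₀ n.cast_add_one_ne_zero ?_
  calc ((n : ℝ) + 1) * ∑ σ, H σ = ∑ a : Fin (n + 1), ∑ σ, H ((Equiv.addRight a).trans σ) := by
        simp [hshift]
    _ = ∑ σ, ∑ a : Fin (n + 1), H ((Equiv.addRight a).trans σ) := sum_comm
    _ = (n + 1) * (n ! * (∑ i, x i)⁺) := by
        rw [Fintype.sum_congr _ _ hcycle, sum_const, Finset.card_univ, nsmul_eq_mul, hcard]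
        ring

theorem sum_equiv_comp_castSucc {M : Type*} [AddCommMonoid M] (Φ : (Fin n → ι) → M) :
    ∑ σ : Fin (n + 1) ≃ ι, Φ (σ ∘ Fin.castSucc) =
      ∑ p : ι, ∑ τ : Fin n ≃ {i // i ≠ p}, Φ (Subtype.val ∘ τ) := by
  rw [← sum_fiberwise univ (fun σ : Fin (n + 1) ≃ ι => σ (Fin.last n))]
  refine sum_congr rfl fun p _ => ?_
  rw [sum_subtype _ (p := fun σ : Fin (n + 1) ≃ ι => σ (Fin.last n) = p) (by simp)]
  refine Fintype.sum_equiv ((Equiv.subtypeEquiv (finSuccEquivLast.equivCongr (Equiv.refl ι))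
    fun σ => ?_).trans (Equiv.optionSubtype p)) _ _ fun σ => ?_
  · simp
  · congr 1
    ext i
    simp

theorem sum_sum_finset_map_subtype_ne {M : Type*} [AddCommMonoid M] (g : Finset ι → M) :
    ∑ p : ι, ∑ G : Finset {i // i ≠ p}, g (G.map (Function.Embedding.subtype _)) =
      ∑ F : Finset ι, (Fintype.card ι - #F) • g F := by
  have hp (p : ι) : ∑ G : Finset {i // i ≠ p}, g (G.map (Function.Embedding.subtype _)) =
      ∑ F with p ∉ F, g F := by
    refine sum_nbij' (fun G => G.map (Function.Embedding.subtype _)) (fun F => F.subtype (· ≠ p))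
      ?_ ?_ ?_ ?_ ?_ <;> intro F hF
    · simp
    · simp
    · ext i
      simpa using fun _ => i.2
    · simp only [mem_filter, mem_univ, true_and] at hF
      rw [subtype_map, filter_true_of_mem fun i hi => ?_]
      rintro rfl
      exact hF hi
    · rfl
  simp_rw [hp, sum_filter]
  rw [sum_comm]
  refine sum_congr rfl fun F _ => ?_
  rw [← sum_filter, sum_const, filter_not, filter_mem_eq_inter, univ_inter, ← compl_eq_univ_sdiff,
    card_compl]

theorem sum_subsetPosPartSum_subtype_ne_add (hι : Fintype.card ι = n + 1) (x : ι → ℝ) :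
    ∑ p : ι, subsetPosPartSum n (fun i : {i // i ≠ p} => x i) + n ! * (∑ i, x i)⁺ =
      subsetPosPartSum (n + 1) x := by
  set g : Finset ι → ℝ := fun F => (((#F - 1)! * (n - #F)! : ℕ) : ℝ) * (∑ i ∈ F, x i)⁺
  have hg (p : ι) : subsetPosPartSum n (fun i : {i // i ≠ p} => x i) =
      ∑ G : Finset {i // i ≠ p}, g (G.map (Function.Embedding.subtype _)) := by
    simp [subsetPosPartSum, g, card_map, sum_map]
  have hlast : n ! * (∑ i, x i)⁺ =
      ∑ F : Finset ι, ((if #F = n + 1 then n ! else 0 : ℕ) : ℝ) * (∑ i ∈ F, x i)⁺ := by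
    simp_rw [← hι, card_eq_iff_eq_univ]
    simp
  simp_rw [hg]
  rw [sum_sum_finset_map_subtype_ne, hι, hlast, ← sum_add_distrib, subsetPosPartSum]
  refine sum_congr rfl fun F _ => ?_
  rw [← sub_mul_factorial_mul_factorial_add_ite (hι ▸ card_le_univ F)]
  simp only [g, nsmul_eq_mul]
  push_cast
  ring

theorem sum_maxPrefixSum_comp_equiv (hι : Fintype.card ι = n) (x : ι → ℝ) :
    ∑ σ : Fin n ≃ ι, maxPrefixSum (x ∘ σ) = subsetPosPartSum n x := by
  induction n generalizing ι with
  | zero =>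
    have : IsEmpty ι := Fintype.card_eq_zero_iff.1 hι
    simp [subsetPosPartSum, maxPrefixSum_fin_zero, eq_empty_of_isEmpty]
  | succ n ih =>
    have hsucc (σ : Fin (n + 1) ≃ ι) : maxPrefixSum (x ∘ σ) = maxPrefixSum (x ∘ σ ∘ Fin.castSucc) +
        (∑ i, x i - maxPrefixSum (x ∘ σ ∘ Fin.castSucc))⁺ := by
      have hsum : ∑ i, (x ∘ σ) i = ∑ i, x i := Equiv.sum_comp σ x
      rw [maxPrefixSum_succ, hsum, sup_comm, sup_eq_add_posPart_sub]
      rfl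
    have hne (p : ι) : Fintype.card {i // i ≠ p} = n := by
      simp [Fintype.card_subtype_compl, hι]
    rw [Fintype.sum_congr _ _ hsucc, sum_add_distrib,
      sum_equiv_comp_castSucc (fun f => maxPrefixSum (x ∘ f)),
      sum_posPart_sum_sub_maxPrefixSum_castSucc hι, ← sum_subsetPosPartSum_subtype_ne_add hι]
    exact congrArg (· + _) (sum_congr rfl fun p _ => ih (hne p) (x ∘ Subtype.val))

end Permutations

section Pairing

variable {ι : Type*} [Fintype ι] [DecidableEq ι] {x : ι → ℝ}

theorem sum_mul_sum_eq_zero_of_sum_eq_zero (hx : ∑ i, x i = 0) (c : ℕ → ℝ) :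
    ∑ F : Finset ι, c #F * ∑ i ∈ F, x i = 0 := by
  set w : ι → ℝ := fun i => ∑ F : Finset ι, if i ∈ F then c #F else 0
  have hw (i j : ι) : w i = w j :=
    Fintype.sum_equiv (Equiv.finsetCongr (Equiv.swap i j)) _ _ fun F => by
      simp [Equiv.finsetCongr_apply, mem_map_equiv, card_map]
  calc ∑ F : Finset ι, c #F * ∑ i ∈ F, x i
      = ∑ F : Finset ι, ∑ i, (if i ∈ F then c #F else 0) * x i := by
        simp [ite_mul, mul_sum]
    _ = ∑ i, w i * x i := by
        rw [sum_comm]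
        simp_rw [← sum_mul]
        rfl
    _ = 0 := by
        rcases isEmpty_or_nonempty ι with _ | ⟨⟨i₀⟩⟩
        · simp
        · simp_rw [hw _ i₀, ← mul_sum, hx, mul_zero]

theorem sum_mul_abs_sum_compl (hx : ∑ i, x i = 0) (g : ℕ → ℝ) :
    ∑ F : Finset ι, g #F * |∑ i ∈ F, x i| =
      ∑ F : Finset ι, g (Fintype.card ι - #F) * |∑ i ∈ F, x i| :=
  Fintype.sum_equiv (Function.Involutive.toPerm compl compl_involutive) _ _ fun F => by
    have : ∑ i ∈ Fᶜ, x i = -∑ i ∈ F, x i := by linarith [sum_compl_add_sum F x]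
    simp [card_compl, this, Nat.sub_sub_self (card_le_univ F)]

theorem factorial_mul_factorial_add_factorial_mul_factorial {n k : ℕ} (h0 : 0 < k) (hn : k < n) :
    (k - 1)! * (n - k)! + (n - k - 1)! * (n - (n - k))! = n * ((k - 1)! * (n - k - 1)!) := by
  obtain ⟨a, rfl⟩ := Nat.exists_eq_add_of_lt h0
  obtain ⟨b, rfl⟩ := Nat.exists_eq_add_of_lt hn
  simp only [show 0 + a + 1 + b + 1 - (0 + a + 1) = b + 1 by omega,
    show 0 + a + 1 + b + 1 - (b + 1) = a + 1 by omega, show 0 + a + 1 - 1 = a by omega,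
    Nat.add_sub_cancel, Nat.factorial_succ]
  ring

theorem subsetPosPartSum_eq_of_sum_eq_zero {n : ℕ} (hι : Fintype.card ι = n)
    (hx : ∑ i, x i = 0) :
    subsetPosPartSum n x =
      n / 4 * ∑ F : Finset ι, (if #F = 0 then 0 else ((#F - 1)! : ℝ)) *
        (if #F = n then 0 else ((n - #F - 1)! : ℝ)) * |∑ k ∈ F, x k| := by
  set a : ℕ → ℝ := fun k => (((k - 1)! * (n - k)! : ℕ) : ℝ)
  have hsym : ∑ F : Finset ι, a #F * |∑ i ∈ F, x i| =
      ∑ F : Finset ι, a (n - #F) * |∑ i ∈ F, x i| := hι ▸ sum_mul_abs_sum_compl hx a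
  have hterm (F : Finset ι) : (a #F + a (n - #F)) * |∑ i ∈ F, x i| =
      n * ((if #F = 0 then 0 else ((#F - 1)! : ℝ)) *
        (if #F = n then 0 else ((n - #F - 1)! : ℝ)) * |∑ k ∈ F, x k|) := by
    by_cases h0 : #F = 0
    · simp [card_eq_zero.1 h0]
    by_cases hn : #F = n
    · simp [(card_eq_iff_eq_univ F).1 (hι ▸ hn), hx]
    rw [if_neg h0, if_neg hn]
    have := factorial_mul_factorial_add_factorial_mul_factorial (Nat.pos_of_ne_zero h0)
      (lt_of_le_of_ne (hι ▸ card_le_univ F) hn)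
    simp only [a]
    rw [← Nat.cast_add, this]
    push_cast
    ring
  calc subsetPosPartSum n x
      = ∑ F : Finset ι, (a #F * |∑ i ∈ F, x i| + a #F * ∑ i ∈ F, x i) / 2 := by
        refine sum_congr rfl fun F _ => ?_
        rw [← mul_add, abs_add_eq_two_nsmul_posPart, two_nsmul]
        ring
    _ = (∑ F : Finset ι, a #F * |∑ i ∈ F, x i| +
          ∑ F : Finset ι, a (n - #F) * |∑ i ∈ F, x i|) / 4 := by
        rw [← sum_div, sum_add_distrib, sum_mul_sum_eq_zero_of_sum_eq_zero hx a, ← hsym]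
        ring
    _ = _ := by
        rw [← sum_add_distrib]
        simp_rw [← add_mul, hterm, ← mul_sum]
        ring

end Pairing

theorem rudnick_sarnak (n : ℕ) (hn : 1 ≤ n) (x : Fin n → ℝ) (hx : ∑ i, x i = 0) :
    ∑ σ : Equiv.Perm (Fin n),
      (Finset.Icc 1 n).sup' (Finset.nonempty_Icc.mpr hn)
        (fun j => ∑ i ∈ Finset.univ.filter (fun i : Fin n => (i : ℕ) < j), x (σ i))
    = ((n : ℝ) / 4) * ∑ F ∈ (Finset.univ : Finset (Fin n)).powerset,
        (if F.card = 0 then 0 else ((F.card - 1).factorial : ℝ)) *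
          (if F.card = n then 0 else ((n - F.card - 1).factorial : ℝ)) *
          |∑ k ∈ F, x k| := by
  have hM (σ : Equiv.Perm (Fin n)) :
      (Icc 1 n).sup' (nonempty_Icc.mpr hn) (prefixSum (x ∘ σ)) = maxPrefixSum (x ∘ σ) :=
    sup'_Icc_prefixSum_eq_maxPrefixSum hn ((Equiv.sum_comp σ x).trans hx)
  rw [powerset_univ, ← subsetPosPartSum_eq_of_sum_eq_zero (Fintype.card_fin n) hx,
    ← sum_maxPrefixSum_comp_equiv (Fintype.card_fin n) x]
  exact Fintype.sum_congr _ _ hM
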